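/- arXiv:2407.03099 — 8 statements merged into one kernel-verified Lean document; each statement's English description precedes it below -/
import Mathlib

section
/- For every integer n ≥ 1, Σ_{i=1}^{A_n} (k̂(T^{i−1}(1/n, 1)) − 3) = −1, where A_n := Σ_{k=1}^{n} φ(k). -/
/-- The BCZ map `T(a,b) = (b, ⌊(1+a)/b⌋·b − a)`. -/
noncomputable def bczT (p : ℝ × ℝ) : ℝ × ℝ :=
  (p.2, (⌊(1 + p.1) / p.2⌋ : ℝ) * p.2 - p.1)

/-- `k̂(a,b) = (⌊(1+a)/b⌋ + ⌊(1+b)/a⌋)/2`. -/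
noncomputable def khat (p : ℝ × ℝ) : ℝ :=
  ((⌊(1 + p.1) / p.2⌋ : ℝ) + (⌊(1 + p.2) / p.1⌋ : ℝ)) / 2

/-- The Farey triangle Ω. -/
def fareyTriangle : Set (ℝ × ℝ) :=
  {p | 0 < p.1 ∧ p.1 ≤ 1 ∧ 0 < p.2 ∧ p.2 ≤ 1 ∧ 1 < p.1 + p.2}

/-- An excursion of the BCZ map: points `p 0, …, p s` of Ω, consecutive under `T`,
with all intermediate x-coordinates larger than those of both endpoints. -/
def IsExcursion (p : ℕ → ℝ × ℝ) (s : ℕ) : Prop :=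
  1 ≤ s ∧ (∀ i ≤ s, p i ∈ fareyTriangle) ∧
  (∀ i < s, p (i + 1) = bczT (p i)) ∧
  (∀ i, 0 < i → i < s → (p 0).1 < (p i).1 ∧ (p s).1 < (p i).1)

/-- The golden ratio area Δ of the moduli space of excursions. -/
noncomputable def goldenArea : Set (ℝ × ℝ) :=
  {p | 0 < p.1 ∧ p.1 ≤ 1 ∧ 0 < p.2 ∧ p.2 ≤ 1 ∧
    (Real.sqrt 5 - 1) / 2 ≤ p.2 / p.1 ∧ p.2 / p.1 ≤ (Real.sqrt 5 + 1) / 2}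

/-- `A_n = Σ_{k=1}^n φ(k)`, the number of Farey fractions in `(0,1]` of order `n`. -/
def fareyLen (n : ℕ) : ℕ := ∑ k ∈ Finset.Icc 1 n, Nat.totient k

/-!
On the lattice points `p/n` of `Ω`, `T` acts by `bczStep n : (q, q') ↦ (q', ⌊(n + q)/q'⌋ q' − q)`,
which maps a pair of consecutive denominators of the Farey sequence `F_n` to the next one;
the orbit of `(1/n, 1)` therefore runs through all `A_n` such pairs and closes up.
Along a periodic orbit the second floor in `k̂` at a point is the first floor at the previous
point, and `⌊(n + q)/q'⌋ = (q + q'')/q'`, so the sum of `k̂ − 3` equals the sum of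
`q/q' + q'/q − 3` over the pairs.  Passing from `F_n` to `F_{n+1}` replaces each pair with
`q + q' = n + 1` by `(q, n + 1), (n + 1, q')`, which leaves this sum unchanged and adds
`φ (n + 1)` pairs; for `n = 1` the sum is `2 − 3 = −1`.
-/

theorem Function.IsPeriodicPt.sum_range_iterate_succ {α M : Type*} [AddCancelCommMonoid M]
    {f : α → α} {x : α} {A : ℕ} (h : Function.IsPeriodicPt f A x) (g : α → M) :
    ∑ i ∈ Finset.range A, g (f^[i + 1] x) = ∑ i ∈ Finset.range A, g (f^[i] x) := by
  have := Finset.sum_range_succ' (fun i => g (f^[i] x)) A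
  rw [Finset.sum_range_succ, h.eq, Function.iterate_zero_apply] at this
  exact (add_right_cancel this).symm

theorem List.eq_iterate_of_isChain {α : Type*} {f : α → α} {x : α} {l : List α}
    (h : (x :: l).IsChain fun a b => b = f a) : x :: l = List.iterate f x (l.length + 1) := by
  induction l generalizing x with
  | nil => rfl
  | cons y l ih =>
    rw [List.isChain_cons_cons] at h
    rw [List.length_cons, List.iterate, ← h.1, ← ih h.2]

theorem List.sum_map_iterate {α M : Type*} [AddCommMonoid M] (f : α → α) (x : α) (g : α → M)
    (A : ℕ) : ((List.iterate f x A).map g).sum = ∑ i ∈ Finset.range A, g (f^[i] x) := by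
  rw [← List.range_map_iterate, List.map_map, Finset.sum_eq_multiset_sum, Finset.range_val,
    Multiset.range, Multiset.map_coe, Multiset.sum_coe]
  rfl

def bczStep (n : ℕ) (p : ℕ × ℕ) : ℕ × ℕ :=
  (p.2, (n + p.1) / p.2 * p.2 - p.1)

def latticeTriangle (n : ℕ) : Set (ℕ × ℕ) :=
  {p | 0 < p.1 ∧ p.1 ≤ n ∧ 0 < p.2 ∧ p.2 ≤ n ∧ n < p.1 + p.2}

noncomputable def rescale (n : ℕ) (p : ℕ × ℕ) : ℝ × ℝ :=
  ((p.1 : ℝ) / n, (p.2 : ℝ) / n)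

def FareyAdj (p q : ℕ × ℕ) : Prop :=
  p.2 = q.1 ∧ p.2 ∣ p.1 + q.2

section Dynamics

variable {n : ℕ} {p q : ℕ × ℕ}

lemma mk_one_mem_latticeTriangle (hn : 1 ≤ n) : (1, n) ∈ latticeTriangle n :=
  ⟨one_pos, hn, hn, le_rfl, by omega⟩

lemma bczStep_mem (hp : p ∈ latticeTriangle n) : bczStep n p ∈ latticeTriangle n := by
  obtain ⟨a, b⟩ := p
  obtain ⟨ha, han, hb, hbn, hab⟩ : 0 < a ∧ a ≤ n ∧ 0 < b ∧ b ≤ n ∧ n < a + b := hp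
  have hle := Nat.div_mul_le_self (n + a) b
  have hlt := Nat.lt_div_mul_add (a := n + a) hb
  refine ⟨hb, hbn, ?_, ?_, ?_⟩ <;> simp only [bczStep] <;> omega

lemma bczStep_eq_of_fareyAdj (hq : q ∈ latticeTriangle n) (hpq : FareyAdj p q) :
    bczStep n p = q := by
  obtain ⟨a, b⟩ := p
  obtain ⟨b', c⟩ := q
  obtain ⟨-, -, -, hcn, hbc⟩ := hq
  obtain ⟨hbb', k, hk⟩ := hpq
  dsimp only at *
  subst hbb'
  have : (n + a) / b = k :=
    Nat.div_eq_of_lt_le (by rw [mul_comm]; omega) (by rw [add_mul, mul_comm]; omega)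
  simp only [bczStep, this, Prod.mk.injEq, true_and]
  rw [mul_comm]
  omega

lemma div_bczStep_swap (hp : p ∈ latticeTriangle n) :
    (n + (bczStep n p).2) / (bczStep n p).1 = (n + p.1) / p.2 := by
  obtain ⟨a, b⟩ := p
  obtain ⟨ha, han, hb, hbn, hab⟩ : 0 < a ∧ a ≤ n ∧ 0 < b ∧ b ≤ n ∧ n < a + b := hp
  have hle := Nat.div_mul_le_self (n + a) b
  have hlt := Nat.lt_div_mul_add (a := n + a) hb
  dsimp only [bczStep]
  exact Nat.div_eq_of_lt_le (by omega) (by rw [add_mul]; omega)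

lemma cast_div_eq_div_add_div_bczStep (hp : p ∈ latticeTriangle n) :
    (((n + p.1) / p.2 : ℕ) : ℝ) = p.1 / p.2 + (bczStep n p).2 / (bczStep n p).1 := by
  obtain ⟨a, b⟩ := p
  obtain ⟨ha, han, hb, hbn, hab⟩ : 0 < a ∧ a ≤ n ∧ 0 < b ∧ b ≤ n ∧ n < a + b := hp
  have hlt := Nat.lt_div_mul_add (a := n + a) hb
  have hb' : (b : ℝ) ≠ 0 := by positivity
  dsimp only [bczStep] at *
  rw [Nat.cast_sub (by omega), Nat.cast_mul]
  field_simp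
  ring

lemma floor_one_add_div_div (hn : n ≠ 0) (a b : ℕ) :
    ⌊(1 + (a : ℝ) / n) / ((b : ℝ) / n)⌋ = ((n + a) / b : ℕ) := by
  have : (1 + (a : ℝ) / n) / ((b : ℝ) / n) = ((n + a : ℕ) : ℝ) / b := by
    rw [div_div_eq_mul_div]
    push_cast
    field_simp
  rw [this, ← Int.natCast_floor_eq_floor (by positivity), Nat.floor_div_eq_div]

lemma khat_rescale (hn : n ≠ 0) (p : ℕ × ℕ) :
    khat (rescale n p) = ((((n + p.1) / p.2 : ℕ) : ℝ) + ((n + p.2) / p.1 : ℕ)) / 2 := by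
  simp only [khat, rescale, floor_one_add_div_div hn, Int.cast_natCast]

lemma bczT_rescale (hn : n ≠ 0) (hp : p ∈ latticeTriangle n) :
    bczT (rescale n p) = rescale n (bczStep n p) := by
  obtain ⟨a, b⟩ := p
  obtain ⟨ha, han, hb, hbn, hab⟩ : 0 < a ∧ a ≤ n ∧ 0 < b ∧ b ≤ n ∧ n < a + b := hp
  have hlt := Nat.lt_div_mul_add (a := n + a) hb
  simp only [bczT, rescale, bczStep, floor_one_add_div_div hn, Int.cast_natCast, Prod.mk.injEq,
    true_and]
  rw [Nat.cast_sub (by omega), Nat.cast_mul]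
  ring

lemma bczT_iterate_rescale (hn : n ≠ 0) (hp : p ∈ latticeTriangle n) (i : ℕ) :
    bczT^[i] (rescale n p) = rescale n ((bczStep n)^[i] p) := by
  induction i with
  | zero => rfl
  | succ i ih =>
    rw [Function.iterate_succ_apply', ih, Function.iterate_succ_apply',
      bczT_rescale hn ((Set.MapsTo.iterate (fun _ => bczStep_mem) i) hp)]

end Dynamics

noncomputable def ratioWeight (p : ℕ × ℕ) : ℝ :=
  p.1 / p.2 + p.2 / p.1 - 3

lemma sum_khat_sub_three_orbit {n A : ℕ} {p : ℕ × ℕ} (hn : n ≠ 0) (hp : p ∈ latticeTriangle n)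
    (hA : Function.IsPeriodicPt (bczStep n) A p) :
    ∑ i ∈ Finset.range A, (khat (bczT^[i] (rescale n p)) - 3) =
      ∑ i ∈ Finset.range A, ratioWeight ((bczStep n)^[i] p) := by
  set q : ℕ → ℕ × ℕ := fun i => (bczStep n)^[i] p
  have hq : ∀ i, q i ∈ latticeTriangle n :=
    fun i => Set.MapsTo.iterate (fun _ => bczStep_mem) i hp
  have hsucc : ∀ i, q (i + 1) = bczStep n (q i) := fun i => Function.iterate_succ_apply' _ _ _
  let k : ℕ × ℕ → ℝ := fun q => ((n + q.1) / q.2 : ℕ)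
  let r : ℕ × ℕ → ℝ := fun q => q.1 / q.2
  have hk_swap : ∑ i ∈ Finset.range A, k (q i).swap = ∑ i ∈ Finset.range A, k (q i) := by
    refine (hA.sum_range_iterate_succ fun x => k x.swap).symm.trans
      (Finset.sum_congr rfl fun i _ => ?_)
    change k (q (i + 1)).swap = k (q i)
    simp only [k, hsucc, Prod.fst_swap, Prod.snd_swap, div_bczStep_swap (hq i)]
  have hk : ∑ i ∈ Finset.range A, k (q i) =
      ∑ i ∈ Finset.range A, r (q i) + ∑ i ∈ Finset.range A, r (q i).swap := by
    rw [← hA.sum_range_iterate_succ fun x => r x.swap, ← Finset.sum_add_distrib]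
    refine Finset.sum_congr rfl fun i _ => ?_
    change k (q i) = r (q i) + r (q (i + 1)).swap
    simp only [k, r, hsucc, cast_div_eq_div_add_div_bczStep (hq i), Prod.fst_swap, Prod.snd_swap]
  simp only [bczT_iterate_rescale hn hp, khat_rescale hn]
  change ∑ i ∈ Finset.range A, ((k (q i) + k (q i).swap) / 2 - 3) =
    ∑ i ∈ Finset.range A, (r (q i) + r (q i).swap - 3)
  simp only [Finset.sum_sub_distrib, Finset.sum_add_distrib, ← Finset.sum_div, hk_swap, hk]
  ring

def insertMediant (m : ℕ) (p : ℕ × ℕ) : List (ℕ × ℕ) :=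
  if p.1 + p.2 = m then [(p.1, m), (m, p.2)] else [p]

/-- The pairs `(q, q')` of denominators of consecutive fractions `a/q < a'/q'` of the Farey
sequence of order `n` in `[0, 1]`, from `(1, n)` (at `0/1 < 1/n`) to `(n, 1)`. -/
def fareyPairs : ℕ → List (ℕ × ℕ)
  | 0 => [(1, 1)]
  | n + 1 => (fareyPairs n).flatMap (insertMediant (n + 1))

section FareyPairs

variable {n m : ℕ} {p q : ℕ × ℕ}

lemma coprime_mem_latticeTriangle_succ_iff (hn : 1 ≤ n) :
    q ∈ latticeTriangle (n + 1) ∧ q.1.Coprime q.2 ↔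
      ∃ p ∈ latticeTriangle n, p.1.Coprime p.2 ∧ q ∈ insertMediant (n + 1) p := by
  obtain ⟨x, y⟩ := q
  simp only [latticeTriangle, insertMediant, Set.mem_ofPred_eq, Prod.exists]
  constructor
  · rintro ⟨⟨hx, hxn, hy, hyn, hxy⟩, hcop⟩
    by_cases hyn' : y = n + 1
    · subst hyn'
      have : x ≠ n + 1 := by rintro rfl; simp [Nat.coprime_self] at hcop; omega
      refine ⟨x, n + 1 - x, ⟨hx, by omega, by omega, by omega, by omega⟩, ?_, ?_⟩
      · exact (Nat.coprime_sub_self_right hxn).mpr hcop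
      · simp [show x + (n + 1 - x) = n + 1 by omega]
    by_cases hxn' : x = n + 1
    · subst hxn'
      refine ⟨n + 1 - y, y, ⟨by omega, by omega, hy, by omega, by omega⟩, ?_, ?_⟩
      · exact (Nat.coprime_sub_self_left hyn).mpr hcop
      · simp [show n + 1 - y + y = n + 1 by omega]
    · refine ⟨x, y, ⟨hx, by omega, hy, by omega, by omega⟩, hcop, ?_⟩
      simp [show x + y ≠ n + 1 by omega]
  · rintro ⟨a, b, ⟨ha, han, hb, hbn, hab⟩, hcop, hmem⟩
    split_ifs at hmem with hs
    · simp only [List.mem_cons, Prod.mk.injEq, List.not_mem_nil, or_false] at hmem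
      rcases hmem with ⟨rfl, rfl⟩ | ⟨rfl, rfl⟩
      · refine ⟨by omega, ?_⟩
        rw [← hs]
        exact Nat.coprime_self_add_right.mpr hcop
      · refine ⟨by omega, ?_⟩
        rw [← hs]
        exact Nat.coprime_add_self_left.mpr hcop
    · simp only [List.mem_singleton, Prod.mk.injEq] at hmem
      obtain ⟨rfl, rfl⟩ := hmem
      exact ⟨by omega, hcop⟩

lemma fareyPairs_one : fareyPairs 1 = [(1, 1)] := rfl

lemma mem_fareyPairs (hn : 1 ≤ n) :
    p ∈ fareyPairs n ↔ p ∈ latticeTriangle n ∧ p.1.Coprime p.2 := by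
  induction n, hn using Nat.le_induction generalizing p with
  | base =>
    obtain ⟨a, b⟩ := p
    rw [fareyPairs_one, List.mem_singleton]
    constructor
    · rintro ⟨⟩
      exact ⟨by simp [latticeTriangle], Nat.coprime_one_left 1⟩
    · rintro ⟨⟨ha, ha1, hb, hb1, -⟩, -⟩
      simp only [Prod.mk.injEq]
      omega
  | succ n hn ih =>
    rw [coprime_mem_latticeTriangle_succ_iff hn, fareyPairs, List.mem_flatMap]
    simp only [ih, and_assoc]

lemma eq_of_mem_insertMediant {p' : ℕ × ℕ} (hp : p ∈ latticeTriangle n)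
    (hp' : p' ∈ latticeTriangle n) (hq : q ∈ insertMediant (n + 1) p)
    (hq' : q ∈ insertMediant (n + 1) p') : p = p' := by
  obtain ⟨a, b⟩ := p
  obtain ⟨a', b'⟩ := p'
  obtain ⟨-, ha, -, hb, -⟩ : 0 < a ∧ a ≤ n ∧ 0 < b ∧ b ≤ n ∧ n < a + b := hp
  obtain ⟨-, ha', -, hb', -⟩ : 0 < a' ∧ a' ≤ n ∧ 0 < b' ∧ b' ≤ n ∧ n < a' + b' := hp'
  simp only [insertMediant] at hq hq'
  split_ifs at hq hq' <;>
    simp only [List.mem_cons, List.not_mem_nil, or_false] at hq hq' <;>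
    rcases hq with rfl | rfl <;> first
      | (rcases hq' with h | h <;> simp only [Prod.mk.injEq] at h ⊢ <;> omega)
      | (simp only [Prod.mk.injEq] at hq' ⊢; omega)

lemma nodup_fareyPairs (hn : 1 ≤ n) : (fareyPairs n).Nodup := by
  induction n, hn using Nat.le_induction with
  | base => simp [fareyPairs_one]
  | succ n hn ih =>
    rw [fareyPairs, List.nodup_flatMap]
    refine ⟨fun p hp => ?_, ih.imp_of_mem fun hp hp' hne q hq hq' => hne ?_⟩
    · have hp1 := ((mem_fareyPairs hn).mp hp).1.2.1
      unfold insertMediant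
      split_ifs <;> simp [Prod.ext_iff]
      omega
    · exact eq_of_mem_insertMediant ((mem_fareyPairs hn).mp hp).1 ((mem_fareyPairs hn).mp hp').1
        hq hq'

lemma head?_insertMediant :
    (insertMediant m p).head? = some (p.1, if p.1 + p.2 = m then m else p.2) := by
  unfold insertMediant
  split_ifs <;> rfl

lemma getLast?_insertMediant :
    (insertMediant m p).getLast? = some (if p.1 + p.2 = m then m else p.1, p.2) := by
  unfold insertMediant
  split_ifs <;> rfl

lemma isChain_flatMap_insertMediant {l : List (ℕ × ℕ)} (h : l.IsChain FareyAdj) :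
    (l.flatMap (insertMediant m)).IsChain FareyAdj := by
  have hne : ∀ p, insertMediant m p ≠ [] := fun p => by
    simpa using congrArg Option.isSome (head?_insertMediant (m := m) (p := p))
  rw [List.flatMap_def, List.isChain_flatten (by simp [hne]), List.isChain_map]
  refine ⟨fun l hl => ?_, h.imp fun p q ⟨hpq, hdvd⟩ => ?_⟩
  · obtain ⟨p, -, rfl⟩ := List.mem_map.mp hl
    unfold insertMediant
    split_ifs with h <;> simp [FareyAdj, h]
  · obtain ⟨a, b⟩ := p
    obtain ⟨b', c⟩ := q
    dsimp only at hpq hdvd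
    subst hpq
    simp only [getLast?_insertMediant, head?_insertMediant, Option.mem_def, Option.some.injEq,
      forall_eq', FareyAdj, true_and]
    split_ifs <;> first
      | exact hdvd
      | (convert Nat.dvd_add hdvd (dvd_mul_left b 1) using 1; omega)
      | (convert Nat.dvd_add hdvd (dvd_mul_left b 2) using 1; omega)

lemma isChain_fareyPairs (n : ℕ) : (fareyPairs n).IsChain FareyAdj := by
  induction n with
  | zero => exact List.isChain_singleton _
  | succ n ih => exact isChain_flatMap_insertMediant ih

lemma fareyPairs_eq_cons (hn : 1 ≤ n) : ∃ t, fareyPairs n = (1, n) :: t := by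
  induction n, hn using Nat.le_induction with
  | base => exact ⟨[], fareyPairs_one⟩
  | succ n hn ih =>
    obtain ⟨t, ht⟩ := ih
    refine ⟨(n + 1, n) :: t.flatMap (insertMediant (n + 1)), ?_⟩
    rw [fareyPairs, ht, List.flatMap_cons, insertMediant, if_pos (by omega)]
    rfl

lemma fareyPairs_eq_concat (hn : 1 ≤ n) : ∃ t, fareyPairs n = t ++ [(n, 1)] := by
  induction n, hn using Nat.le_induction with
  | base => exact ⟨[], fareyPairs_one⟩
  | succ n hn ih =>
    obtain ⟨t, ht⟩ := ih
    refine ⟨t.flatMap (insertMediant (n + 1)) ++ [(n, n + 1)], ?_⟩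
    rw [fareyPairs, ht, List.flatMap_append, List.flatMap_singleton, insertMediant,
      if_pos (by omega), List.append_assoc]
    rfl

lemma length_flatMap_insertMediant (l : List (ℕ × ℕ)) :
    (l.flatMap (insertMediant m)).length = l.length + l.countP (fun p => p.1 + p.2 = m) := by
  induction l with
  | nil => rfl
  | cons p l ih =>
    rw [List.flatMap_cons, List.length_append, ih, List.length_cons, List.countP_cons,
      insertMediant]
    by_cases h : p.1 + p.2 = m <;> simp [h] <;> omega

lemma countP_fareyPairs (hn : 1 ≤ n) :
    (fareyPairs n).countP (fun p => p.1 + p.2 = n + 1) = Nat.totient (n + 1) := by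
  rw [List.countP_eq_length_filter,
    ← List.toFinset_card_of_nodup ((nodup_fareyPairs hn).filter _), Nat.totient_eq_card_coprime]
  refine Finset.card_nbij' Prod.fst (fun a => (a, n + 1 - a)) (fun p hp => ?_) (fun a ha => ?_)
    (fun p hp => ?_) (fun a _ => rfl)
  all_goals simp only [Finset.mem_coe, List.mem_toFinset, List.mem_filter, mem_fareyPairs hn,
    decide_eq_true_eq, Finset.mem_filter, Finset.mem_range] at *
  · obtain ⟨⟨⟨-, hp1, -, -, -⟩, hcop⟩, hsum⟩ := hp
    refine ⟨by omega, ?_⟩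
    rw [← hsum]
    exact Nat.coprime_self_add_left.mpr hcop.symm
  · obtain ⟨ha, hcop⟩ := ha
    have ha0 : a ≠ 0 := by rintro rfl; simp at hcop; omega
    refine ⟨⟨⟨by omega, by omega, by omega, by omega, by omega⟩, ?_⟩, by omega⟩
    exact (Nat.coprime_sub_self_right ha.le).mpr hcop.symm
  · exact Prod.ext rfl (by omega)

lemma length_fareyPairs (hn : 1 ≤ n) : (fareyPairs n).length = fareyLen n := by
  induction n, hn using Nat.le_induction with
  | base => rfl
  | succ n hn ih =>
    rw [fareyPairs, length_flatMap_insertMediant, ih, countP_fareyPairs hn]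
    simp only [fareyLen, Finset.sum_Icc_succ_top (Nat.le_add_left 1 n)]

lemma sum_ratioWeight_insertMediant (hp : 0 < p.1 ∧ 0 < p.2) :
    ((insertMediant m p).map ratioWeight).sum = ratioWeight p := by
  obtain ⟨a, b⟩ := p
  obtain ⟨ha, hb⟩ : (0 : ℝ) < a ∧ (0 : ℝ) < b := by exact_mod_cast hp
  unfold insertMediant
  split_ifs with h
  · subst h
    simp only [List.map_cons, List.map_nil, List.sum_cons, List.sum_nil, ratioWeight]
    push_cast
    field_simp
    ring
  · simp

lemma sum_ratioWeight_fareyPairs (hn : 1 ≤ n) : ((fareyPairs n).map ratioWeight).sum = -1 := by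
  induction n, hn using Nat.le_induction with
  | base => norm_num [fareyPairs_one, ratioWeight]
  | succ n hn ih =>
    rw [fareyPairs, List.flatMap_def, List.map_flatten, List.sum_flatten, List.map_map,
      List.map_map, ← ih]
    congr 1
    refine List.map_congr_left fun p hp => sum_ratioWeight_insertMediant ?_
    obtain ⟨⟨h1, -, h2, -⟩, -⟩ := (mem_fareyPairs hn).mp hp
    exact ⟨h1, h2⟩

lemma fareyPairs_append_eq_iterate (hn : 1 ≤ n) :
    fareyPairs n ++ [(1, n)] = List.iterate (bczStep n) (1, n) (fareyLen n + 1) := by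
  obtain ⟨t, ht⟩ := fareyPairs_eq_cons hn
  obtain ⟨u, hu⟩ := fareyPairs_eq_concat hn
  have hmem : ∀ p ∈ fareyPairs n ++ [(1, n)], p ∈ latticeTriangle n := by
    simp only [List.mem_append, List.mem_singleton]
    rintro p (hp | rfl)
    · exact ((mem_fareyPairs hn).mp hp).1
    · exact mk_one_mem_latticeTriangle hn
  have hchain : (fareyPairs n ++ [(1, n)]).IsChain FareyAdj := by
    refine List.isChain_append.mpr ⟨isChain_fareyPairs n, List.isChain_singleton _, ?_⟩
    simp [hu, FareyAdj]
  have hstep : List.IsChain (fun p q => q = bczStep n p) (fareyPairs n ++ [(1, n)]) :=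
    (List.IsChain.iff_mem.mp hchain).imp fun _ q ⟨_, hq, hpq⟩ =>
      (bczStep_eq_of_fareyAdj (hmem q hq) hpq).symm
  rw [ht, List.cons_append] at hstep ⊢
  rw [List.eq_iterate_of_isChain hstep, ← length_fareyPairs hn, ht]
  simp

end FareyPairs

theorem sum_khat_periodic_orbit (n : ℕ) (hn : 1 ≤ n) :
    ∑ i ∈ Finset.range (fareyLen n), (khat (bczT^[i] (1 / (n : ℝ), 1)) - 3) = -1 := by
  have hn₀ : n ≠ 0 := by omega
  obtain ⟨horbit, hperiodic⟩ : fareyPairs n = List.iterate (bczStep n) (1, n) (fareyLen n) ∧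
      [(1, n)] = [(bczStep n)^[fareyLen n] (1, n)] := by
    refine List.append_inj ?_ (by rw [List.length_iterate, length_fareyPairs hn])
    rw [fareyPairs_append_eq_iterate hn, List.iterate_add]
    rfl
  have hstart : ((1 : ℝ) / n, (1 : ℝ)) = rescale n (1, n) := by simp [rescale, hn₀]
  rw [hstart, sum_khat_sub_three_orbit hn₀ (mk_one_mem_latticeTriangle hn)
    (List.singleton_inj.mp hperiodic).symm, ← List.sum_map_iterate, ← horbit,
    sum_ratioWeight_fareyPairs hn]
end

section
/- (Reset control.) For every excursion ((a_i,b_i))_{i=0}^{s} of the BCZ map, a_s/a_0 + a_0/a_s − 4 < Σ_{m=0}^{s−1} (k̂(a_m,b_m) − 3) < a_s/a_0 + a_0/a_s − 2. -/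
/-! Write the orbit as `p i = (a i, a (i + 1))`. The BCZ recursion reads
`a i + a (i + 2) = k(p i) · a (i + 1)`, and `k` of the swapped point `T (p i)` is again
`k(p i)`, so `∑ (k̂ - 3)` telescopes to `∑ (a (i+1) / a i + a i / a (i+1)) - 3s` plus the
boundary terms `b / a - k(b, a) / 2` at `p 0` and `p s`, each of absolute value `< 1/2`.
For an excursion the ratio sum is `a s / a 0 + a 0 / a s + 3 (s - 1)`: without a mediant
`a (n + 1) = a n + a (n + 2)` every multiplier is `≥ 2`, so the heights would be convex,
which the excursion shape forbids; and deleting a mediant keeps the excursion shape and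
lowers the ratio sum by exactly `3`. -/

open Finset

section IntegerExcursion

variable {𝕜 : Type*} [Field 𝕜] [LinearOrder 𝕜] [IsStrictOrderedRing 𝕜]

structure IsIntegerExcursion (a : ℕ → 𝕜) (s : ℕ) : Prop where
  pos : ∀ i ≤ s, 0 < a i
  integral : ∀ n, n + 2 ≤ s → ∃ K : ℤ, a n + a (n + 2) = K * a (n + 1)
  interior : ∀ i, 0 < i → i < s → a 0 < a i ∧ a s < a i

def eraseIdx {α : Type*} (a : ℕ → α) (k : ℕ) (i : ℕ) : α :=
  if i < k then a i else a (i + 1)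

lemma eraseIdx_of_lt {α : Type*} {a : ℕ → α} {k i : ℕ} (h : i < k) : eraseIdx a k i = a i :=
  if_pos h

lemma eraseIdx_of_le {α : Type*} {a : ℕ → α} {k i : ℕ} (h : k ≤ i) :
    eraseIdx a k i = a (i + 1) :=
  if_neg (Nat.not_lt.mpr h)

lemma sum_range_pairs_eraseIdx {α M : Type*} [AddCommGroup M] (f : α → α → M) (a : ℕ → α)
    (n r : ℕ) :
    ∑ m ∈ range (n + r + 2), f (a m) (a (m + 1)) =
      ∑ m ∈ range (n + r + 1), f (eraseIdx a (n + 1) m) (eraseIdx a (n + 1) (m + 1)) +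
        f (a n) (a (n + 1)) + f (a (n + 1)) (a (n + 2)) - f (a n) (a (n + 2)) := by
  rw [show n + r + 2 = n + (r + 1 + 1) by omega, show n + r + 1 = n + (r + 1) by omega,
    sum_range_add _ n (r + 1 + 1), sum_range_add _ n (r + 1), sum_range_succ' _ (r + 1),
    sum_range_succ' _ r, sum_range_succ' _ r]
  have head : ∑ m ∈ range n, f (eraseIdx a (n + 1) m) (eraseIdx a (n + 1) (m + 1)) =
      ∑ m ∈ range n, f (a m) (a (m + 1)) :=
    sum_congr rfl fun m hm => by
      rw [eraseIdx_of_lt (by simp at hm; omega), eraseIdx_of_lt (by simp at hm; omega)]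
  have tail : ∀ m, f (eraseIdx a (n + 1) (n + (m + 1))) (eraseIdx a (n + 1) (n + (m + 1) + 1)) =
      f (a (n + (m + 1 + 1))) (a (n + (m + 1 + 1) + 1)) := fun m => by
    rw [eraseIdx_of_le (by omega), eraseIdx_of_le (by omega)]; ring_nf
  simp only [head, tail, add_zero, eraseIdx_of_lt (Nat.lt_succ_self n),
    eraseIdx_of_le (le_refl (n + 1))]
  abel

lemma mediant_ratio_sum {x z : 𝕜} (hx : 0 < x) (hz : 0 < z) :
    ((x + z) / x + x / (x + z)) + (z / (x + z) + (x + z) / z) - (z / x + x / z) = 3 := by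
  field_simp
  ring

namespace IsIntegerExcursion

variable {a : ℕ → 𝕜} {s : ℕ}

lemma exists_mediant (h : IsIntegerExcursion a (s + 2)) :
    ∃ n ≤ s, a n + a (n + 2) = a (n + 1) := by
  by_contra! hne
  have convex : ∀ n ≤ s, a (n + 1) - a n ≤ a (n + 2) - a (n + 1) := by
    intro n hn
    obtain ⟨K, hK⟩ := h.integral n (by omega)
    have h0 := h.pos n (by omega)
    have h1 := h.pos (n + 1) (by omega)
    have h2 := h.pos (n + 2) (by omega)
    have hK0 : (0 : 𝕜) < K := pos_of_mul_pos_left (hK ▸ by positivity) h1.le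
    have hK1 : K ≠ 1 := by rintro rfl; exact hne n hn (by simpa using hK)
    have hK2 : (2 : 𝕜) ≤ K := by
      have : 0 < K := Int.cast_pos.mp hK0
      exact_mod_cast (by omega : 2 ≤ K)
    nlinarith
  have chain : ∀ n ≤ s + 1, a 1 - a 0 ≤ a (n + 1) - a n := by
    intro n hn
    induction n with
    | zero => exact le_rfl
    | succ n ih => exact (ih (by omega)).trans (convex n (by omega))
  have rise := (h.interior 1 one_pos (by omega)).1
  have fall := (h.interior (s + 1) (by omega) (by omega)).2
  linarith [chain (s + 1) le_rfl]

lemma eraseIdx_mediant (h : IsIntegerExcursion a (s + 1)) {n : ℕ} (hn : n < s)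
    (hmed : a n + a (n + 2) = a (n + 1)) : IsIntegerExcursion (eraseIdx a (n + 1)) s := by
  have below : ∀ i ≤ n, eraseIdx a (n + 1) i = a i := fun i hi => eraseIdx_of_lt (by omega)
  have above : ∀ i, n < i → eraseIdx a (n + 1) i = a (i + 1) := fun i hi => eraseIdx_of_le hi
  refine ⟨fun i his => ?_, fun j hj => ?_, fun i hi0 his => ?_⟩
  · rcases le_or_gt i n with hin | hin
    · exact below i hin ▸ h.pos i (by omega)
    · exact above i hin ▸ h.pos (i + 1) (by omega)
  -- the multipliers at the two neighbours of the deleted mediant drop by one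
  · rcases lt_trichotomy (j + 1) n with hjn | rfl | hjn
    · rw [below j (by omega), below (j + 1) (by omega), below (j + 2) (by omega)]
      exact h.integral j (by omega)
    · obtain ⟨K, hK⟩ := h.integral j (by omega)
      rw [below j (by omega), below (j + 1) le_rfl, above (j + 2) (by omega)]
      exact ⟨K - 1, by push_cast; linarith⟩
    · obtain ⟨K, hK⟩ := h.integral (j + 1) (by omega)
      rw [above (j + 1) (by omega), above (j + 2) (by omega)]
      rcases eq_or_lt_of_le (Nat.lt_succ_iff.mp hjn) with rfl | hjn
      · rw [below n le_rfl]
        exact ⟨K - 1, by push_cast; linarith⟩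
      · rw [above j hjn]
        exact ⟨K, hK⟩
  · rw [below 0 (Nat.zero_le n), above s hn]
    rcases le_or_gt i n with hin | hin
    · exact below i hin ▸ h.interior i hi0 (by omega)
    · exact above i hin ▸ h.interior (i + 1) (by omega) (by omega)

theorem sum_ratios (h : IsIntegerExcursion a (s + 1)) :
    ∑ m ∈ range (s + 1), (a (m + 1) / a m + a m / a (m + 1)) =
      a (s + 1) / a 0 + a 0 / a (s + 1) + 3 * s := by
  induction s generalizing a with
  | zero => simp
  | succ s ih =>
    obtain ⟨n, hn, hmed⟩ := h.exists_mediant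
    obtain ⟨r, rfl⟩ := Nat.exists_eq_add_of_le hn
    have hb := ih (h.eraseIdx_mediant (by omega) hmed)
    rw [eraseIdx_of_lt (Nat.succ_pos n), eraseIdx_of_le (by omega)] at hb
    have h3 := mediant_ratio_sum (h.pos n (by omega)) (h.pos (n + 2) (by omega))
    rw [sum_range_pairs_eraseIdx (fun x y => y / x + x / y) a n r, hb, ← hmed]
    push_cast
    linarith

end IsIntegerExcursion

end IntegerExcursion

section BCZ

noncomputable def itinerary (q : ℝ × ℝ) : ℤ := ⌊(1 + q.1) / q.2⌋

lemma bczT_eq (q : ℝ × ℝ) : bczT q = (q.2, itinerary q * q.2 - q.1) := rfl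

lemma khat_eq (q : ℝ × ℝ) : khat q = (itinerary q + itinerary q.swap) / 2 := rfl

lemma itinerary_swap_bczT {q : ℝ × ℝ} (hq : q ∈ fareyTriangle) :
    itinerary (bczT q).swap = itinerary q := by
  obtain ⟨-, hx1, hy, -, hxy⟩ := hq
  simp only [itinerary, bczT_eq, Prod.swap_prod_mk, Int.floor_eq_iff, le_div_iff₀ hy,
    div_lt_iff₀ hy]
  constructor <;> linarith

lemma abs_div_sub_itinerary_swap_lt {q : ℝ × ℝ} (hq : q ∈ fareyTriangle) :
    |q.2 / q.1 - itinerary q.swap / 2| < 1 / 2 := by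
  obtain ⟨hx, -, -, hy1, hxy⟩ := hq
  have hk : (itinerary q.swap : ℝ) ≤ (1 + q.2) / q.1 := Int.floor_le _
  have hk' : (1 + q.2) / q.1 < itinerary q.swap + 1 := Int.lt_floor_add_one _
  generalize (itinerary q.swap : ℝ) = k at hk hk' ⊢
  have hgap : 0 ≤ (1 - q.2) / q.1 := div_nonneg (by linarith) hx.le
  have hgap' : (1 - q.2) / q.1 < 1 := (div_lt_one hx).mpr (by linarith)
  rw [add_div] at hk hk'
  rw [sub_div] at hgap hgap'
  rw [abs_sub_lt_iff]
  constructor <;> linarith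

/-- Along an orbit of `bczT`, `p i = (heights p i, heights p (i + 1))`. -/
noncomputable def heights (p : ℕ → ℝ × ℝ) : ℕ → ℝ
  | 0 => (p 0).1
  | i + 1 => (p i).2

namespace IsExcursion

variable {p : ℕ → ℝ × ℝ} {s : ℕ}

lemma mem (h : IsExcursion p s) {i : ℕ} (hi : i ≤ s) : p i ∈ fareyTriangle := h.2.1 i hi

lemma succ_eq (h : IsExcursion p s) {i : ℕ} (hi : i < s) : p (i + 1) = bczT (p i) := h.2.2.1 i hi

lemma heights_eq_fst (h : IsExcursion p s) {i : ℕ} (hi : i ≤ s) : heights p i = (p i).1 := by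
  cases i with
  | zero => rfl
  | succ i => rw [heights, h.succ_eq hi]; rfl

lemma itinerary_mul_heights (h : IsExcursion p s) {m : ℕ} (hm : m < s) :
    itinerary (p m) * heights p (m + 1) = heights p m + heights p (m + 2) := by
  rw [heights, heights, h.heights_eq_fst hm.le, h.succ_eq hm, bczT_eq]
  ring

lemma isIntegerExcursion_heights (h : IsExcursion p s) : IsIntegerExcursion (heights p) s where
  pos i hi := h.heights_eq_fst hi ▸ (h.mem hi).1
  integral n hn := ⟨itinerary (p n), (h.itinerary_mul_heights (by omega)).symm⟩
  interior i hi0 his := by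
    rw [h.heights_eq_fst le_rfl, h.heights_eq_fst (Nat.zero_le s), h.heights_eq_fst his.le]
    exact h.2.2.2 i hi0 his

lemma sum_khat_sub_three (h : IsExcursion p s) :
    ∑ m ∈ range s, (khat (p m) - 3) =
      ∑ m ∈ range s, (heights p (m + 1) / heights p m + heights p m / heights p (m + 1)) -
        3 * s + ((p s).2 / (p s).1 - itinerary (p s).swap / 2) -
        ((p 0).2 / (p 0).1 - itinerary (p 0).swap / 2) := by
  set a := heights p
  have term : ∀ m ∈ range s, khat (p m) - 3 =
      (a (m + 1) / a m + a m / a (m + 1) - 3) + (a (m + 1 + 1) / a (m + 1) - a (m + 1) / a m) -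
        ((itinerary (p (m + 1)).swap : ℝ) / 2 - (itinerary (p m).swap : ℝ) / 2) := by
    intro m hm
    have hm := mem_range.mp hm
    have ha₀ : a m ≠ 0 := (h.isIntegerExcursion_heights.pos m hm.le).ne'
    have ha : a (m + 1) ≠ 0 := (h.isIntegerExcursion_heights.pos (m + 1) hm).ne'
    have hk : (itinerary (p m) : ℝ) = (a m + a (m + 2)) / a (m + 1) :=
      eq_div_of_mul_eq ha (h.itinerary_mul_heights hm)
    rw [khat_eq, h.succ_eq hm, itinerary_swap_bczT (h.mem hm.le), hk]
    field_simp
    ring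
  rw [sum_congr rfl term, sum_sub_distrib, sum_add_distrib, sum_sub_distrib, sum_const, card_range,
    sum_range_sub (fun m => a (m + 1) / a m), sum_range_sub (fun m => (itinerary (p m).swap : ℝ) / 2)]
  simp only [a, heights, h.heights_eq_fst le_rfl, nsmul_eq_mul]
  ring

end IsExcursion

end BCZ

theorem reset_control (p : ℕ → ℝ × ℝ) (s : ℕ) (h : IsExcursion p s) :
    (p s).1 / (p 0).1 + (p 0).1 / (p s).1 - 4 <
        ∑ m ∈ Finset.range s, (khat (p m) - 3) ∧
      ∑ m ∈ Finset.range s, (khat (p m) - 3) <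
        (p s).1 / (p 0).1 + (p 0).1 / (p s).1 - 2 := by
  obtain ⟨t, rfl⟩ := Nat.exists_eq_add_of_le' h.1
  rw [h.sum_khat_sub_three, h.isIntegerExcursion_heights.sum_ratios,
    h.heights_eq_fst le_rfl, h.heights_eq_fst (Nat.zero_le _)]
  obtain ⟨start₁, start₂⟩ := abs_lt.mp (abs_div_sub_itinerary_swap_lt (h.mem (Nat.zero_le _)))
  obtain ⟨stop₁, stop₂⟩ := abs_lt.mp (abs_div_sub_itinerary_swap_lt (h.mem le_rfl))
  push_cast
  constructor <;> linarith
end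

section
/- (Reverse of an excursion.) Let ((a_i,b_i))_{i=0}^{s} be an excursion of the BCZ map, and let (a_{−1}, b_{−1}) ∈ Ω be a point with T(a_{−1},b_{−1}) = (a_0,b_0) (so b_{−1} = a_0). Then the sequence ((c_m,d_m))_{m=0}^{s} defined by (c_m,d_m) := (b_{s−1−m}, a_{s−1−m}) is again an excursion of the BCZ map; its initial x-coordinate is c_0 = b_{s−1} = a_s and its final x-coordinate is c_s = b_{−1} = a_0. -/
/-!
Writing `σ(a,b) = (b,a)`, the BCZ map is reversible on the Farey triangle: `T ∘ σ ∘ T = σ` on Ω.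
Hence reading a `T`-orbit backwards and swapping coordinates is again a `T`-orbit. Prepending the
preimage `(a_{-1}, b_{-1})` to the excursion and reversing yields the sequence `(c_m, d_m)`, whose
x-coordinates `c_m = b_{s-1-m} = a_{s-m}` are those of the excursion in reverse order, so the
excursion inequalities carry over.
-/

def IsBCZOrbit (x : ℕ → ℝ × ℝ) (n : ℕ) : Prop :=
  (∀ i ≤ n, x i ∈ fareyTriangle) ∧ ∀ i < n, x (i + 1) = bczT (x i)

lemma swap_mem_fareyTriangle {x : ℝ × ℝ} (hx : x ∈ fareyTriangle) : x.swap ∈ fareyTriangle := by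
  obtain ⟨h1, h2, h3, h4, h5⟩ := hx
  exact ⟨h3, h4, h1, h2, by rw [Prod.fst_swap, Prod.snd_swap]; linarith⟩

lemma bczT_swap_bczT {x : ℝ × ℝ} (hx : x ∈ fareyTriangle) : bczT (bczT x).swap = x.swap := by
  obtain ⟨-, ha, hb, -, hab⟩ := hx
  set k := ⌊(1 + x.1) / x.2⌋
  -- `(1 + (k b - a)) / b = k + (1 - a) / b` and `0 ≤ 1 - a < b` on Ω
  have hfloor : ⌊(1 + ((k : ℝ) * x.2 - x.1)) / x.2⌋ = k := by
    rw [Int.floor_eq_iff, le_div_iff₀ hb, div_lt_iff₀ hb]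
    constructor <;> nlinarith
  refine Prod.ext rfl ?_
  change (⌊(1 + ((k : ℝ) * x.2 - x.1)) / x.2⌋ : ℝ) * x.2 - ((k : ℝ) * x.2 - x.1) = x.1
  rw [hfloor]
  ring

namespace IsBCZOrbit

variable {x : ℕ → ℝ × ℝ} {n : ℕ}

lemma mono (hx : IsBCZOrbit x n) {m : ℕ} (hmn : m ≤ n) : IsBCZOrbit x m :=
  ⟨fun i hi => hx.1 i (hi.trans hmn), fun i hi => hx.2 i (hi.trans_le hmn)⟩

lemma cons (hx : IsBCZOrbit x n) {q : ℝ × ℝ} (hq : q ∈ fareyTriangle) (hqx : bczT q = x 0) :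
    IsBCZOrbit (Stream'.cons q x) (n + 1) := by
  refine ⟨fun i hi => ?_, fun i hi => ?_⟩
  · cases i with
    | zero => exact hq
    | succ i => exact hx.1 i (by omega)
  · cases i with
    | zero => exact hqx.symm
    | succ i => exact hx.2 i (by omega)

lemma snd_eq_fst_succ (hx : IsBCZOrbit x n) {i : ℕ} (hi : i < n) : (x i).2 = (x (i + 1)).1 := by
  rw [hx.2 i hi]
  rfl

lemma reverse (hx : IsBCZOrbit x n) : IsBCZOrbit (fun m => (x (n - m)).swap) n := by
  refine ⟨fun i hi => swap_mem_fareyTriangle (hx.1 _ (Nat.sub_le n i)), fun i hi => ?_⟩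
  have hsucc : n - i = n - (i + 1) + 1 := by omega
  simp only [hsucc, hx.2 _ (by omega : n - (i + 1) < n)]
  exact (bczT_swap_bczT (hx.1 _ (Nat.sub_le n _))).symm

end IsBCZOrbit

lemma IsExcursion.isBCZOrbit {p : ℕ → ℝ × ℝ} {s : ℕ} (hp : IsExcursion p s) : IsBCZOrbit p s :=
  ⟨hp.2.1, hp.2.2.1⟩

lemma IsExcursion.of_fst_eq_rev {p y : ℕ → ℝ × ℝ} {s : ℕ} (hp : IsExcursion p s)
    (hy : IsBCZOrbit y s) (hfst : ∀ m ≤ s, (y m).1 = (p (s - m)).1) : IsExcursion y s := by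
  refine ⟨hp.1, hy.1, hy.2, fun m hm0 hms => ?_⟩
  obtain ⟨hlt0, hlts⟩ := hp.2.2.2 (s - m) (by omega) (by omega)
  rw [hfst 0 (Nat.zero_le s), hfst s le_rfl, hfst m hms.le, Nat.sub_self, Nat.sub_zero]
  exact ⟨hlts, hlt0⟩

theorem reverse_excursion (p : ℕ → ℝ × ℝ) (s : ℕ) (h : IsExcursion p s)
    (q : ℝ × ℝ) (hq : q ∈ fareyTriangle) (hqT : bczT q = p 0) :
    IsExcursion
        (fun m => if m < s then ((p (s - 1 - m)).2, (p (s - 1 - m)).1) else (q.2, q.1)) s ∧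
      ((fun m => if m < s then ((p (s - 1 - m)).2, (p (s - 1 - m)).1) else (q.2, q.1)) 0).1
          = (p s).1 ∧
      ((fun m => if m < s then ((p (s - 1 - m)).2, (p (s - 1 - m)).1) else (q.2, q.1)) s).1
          = (p 0).1 := by
  have hext : IsBCZOrbit (Stream'.cons q p) (s + 1) := h.isBCZOrbit.cons hq hqT
  have hrev := (hext.mono s.le_succ).reverse
  have hseq : (fun m => if m < s then ((p (s - 1 - m)).2, (p (s - 1 - m)).1) else (q.2, q.1))
      = fun m => (Stream'.cons q p (s - m)).swap := by
    funext m
    split_ifs with hm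
    · rw [show s - m = s - 1 - m + 1 by omega]
      rfl
    · rw [show s - m = 0 by omega]
      rfl
  have hfst : ∀ m ≤ s, (Stream'.cons q p (s - m)).swap.1 = (p (s - m)).1 := fun m _ =>
    hext.snd_eq_fst_succ (by omega)
  rw [hseq]
  refine ⟨h.of_fst_eq_rev hrev hfst, hfst 0 (Nat.zero_le s), ?_⟩
  simpa using hfst s le_rfl
end

section
/- Let n ≥ 1 and let 0 = ρ_0 < ρ_1 < ⋯ < ρ_{A_n} = 1 be the Farey sequence of order n, with ρ_i = p_i/q_i in lowest terms. Then for every k with 0 ≤ k ≤ A_n − 2, the point (q_k/n, q_{k+1}/n) lies in the Farey triangle Ω and T(q_k/n, q_{k+1}/n) = (q_{k+1}/n, q_{k+2}/n). -/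
/-- `ρ : ℕ → ℚ`, restricted to indices `0, …, A`, is the Farey sequence of order `n`:
the increasing enumeration of all rationals in `[0,1]` with reduced denominator at most `n`. -/
def IsFareySeq (n A : ℕ) (ρ : ℕ → ℚ) : Prop :=
  ρ 0 = 0 ∧ ρ A = 1 ∧ (∀ i j, i < j → j ≤ A → ρ i < ρ j) ∧
  (∀ i ≤ A, 0 ≤ ρ i ∧ ρ i ≤ 1 ∧ (ρ i).den ≤ n) ∧
  (∀ q : ℚ, 0 ≤ q → q ≤ 1 → q.den ≤ n → ∃ i ≤ A, ρ i = q)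

/-! Let `p/q < p'/q'` be consecutive in the Farey sequence of order `n`. Bézout gives a fraction
`x/y > p/q` with `q x - p y = 1` and `n - q < y ≤ n`; every fraction strictly between `p/q` and
`x/y` has denominator at least `q + y > n`, so `x/y = p'/q'`. Hence `q p' - p q' = 1` and
`q + q' > n`. For three consecutive fractions the two determinant identities give `q' ∣ q + q''`,
so `q''` is the representative of `-q` modulo `q'` in `(n - q', n]`, which is exactly what the BCZ
map computes from `(q/n, q'/n)`. -/

lemma natCast_div_mem_fareyTriangle {q q' n : ℕ} (hq : q ≤ n) (hq' : q' ≤ n) (hn : n < q + q') :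
    ((q : ℝ) / n, (q' : ℝ) / n) ∈ fareyTriangle := by
  have hn₀ : (0 : ℝ) < n := by exact_mod_cast (show 0 < n by omega)
  have hqpos : (0 : ℝ) < q := by exact_mod_cast (show 0 < q by omega)
  have hq'pos : (0 : ℝ) < q' := by exact_mod_cast (show 0 < q' by omega)
  refine ⟨by positivity, ?_, by positivity, ?_, ?_⟩
  · rw [div_le_one hn₀]; exact_mod_cast hq
  · rw [div_le_one hn₀]; exact_mod_cast hq'
  · rw [← add_div, lt_div_iff₀ hn₀, one_mul]; exact_mod_cast hn

lemma bczT_eq_of_mem {a b c : ℝ} {m : ℤ} (hbc : (b, c) ∈ fareyTriangle) (hm : a + c = m * b) :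
    bczT (a, b) = (b, c) := by
  obtain ⟨hb, -, -, hc, hbc⟩ := hbc
  have hfloor : ⌊(1 + a) / b⌋ = m := by
    rw [Int.floor_eq_iff, le_div_iff₀ hb, div_lt_iff₀ hb]
    constructor <;> linarith
  simp only [bczT, hfloor, Prod.mk.injEq, true_and]
  linarith

namespace Rat

lemma exists_det_eq_one (r : ℚ) {n : ℕ} (hn : r.den ≤ n) :
    ∃ t : ℚ, (r.den : ℤ) * t.num - r.num * t.den = 1 ∧ n < r.den + t.den ∧ t.den ≤ n := by
  obtain ⟨u, v, huv⟩ : IsCoprime r.num r.den := Int.isCoprime_iff_gcd_eq_one.mpr r.reduced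
  set q : ℤ := (r.den : ℤ)
  have hq : 0 < q := Int.natCast_pos.mpr r.pos
  -- `y` is the representative of `-u` modulo `q` in `(n - q, n]`
  set s : ℤ := (n + u) / q
  set y : ℤ := q * s - u
  set x : ℤ := v + r.num * s
  have hdet : q * x - r.num * y = 1 := by linear_combination huv
  have hy : y = n - (n + u) % q := by rw [Int.emod_def]; ring
  have := Int.emod_nonneg (n + u) hq.ne'
  have := Int.emod_lt_of_pos (n + u) hq
  have hypos : 0 < y := by omega
  have hcop : IsCoprime x y := ⟨q, -r.num, by linear_combination hdet⟩
  have hden : ((x / y : ℚ).den : ℤ) = y :=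
    den_div_eq_of_coprime hypos (Int.isCoprime_iff_gcd_eq_one.mp hcop)
  refine ⟨x / y, ?_, ?_, ?_⟩
  · rwa [hden, num_div_eq_of_coprime hypos (Int.isCoprime_iff_gcd_eq_one.mp hcop)]
  all_goals zify; omega

lemma den_add_den_le_of_lt_of_lt {r s t : ℚ} (hdet : (r.den : ℤ) * t.num - r.num * t.den = 1)
    (hrs : r < s) (hst : s < t) : r.den + t.den ≤ s.den := by
  rw [Rat.lt_iff] at hrs hst
  have hs : (s.den : ℤ) = (t.num * s.den - s.num * t.den) * r.den
      + (s.num * r.den - r.num * s.den) * t.den := by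
    linear_combination (-(s.den : ℤ)) * hdet
  zify
  nlinarith [r.pos, t.pos]

lemma den_dvd_den_add_den {r s t : ℚ} (hrs : (r.den : ℤ) * s.num - r.num * s.den = 1)
    (hst : (s.den : ℤ) * t.num - s.num * t.den = 1) : s.den ∣ r.den + t.den := by
  have hcop : IsCoprime (s.den : ℤ) s.num := ⟨t.num, -t.den, by linear_combination hst⟩
  have h : (s.den : ℤ) ∣ s.num * (r.den + t.den) :=
    ⟨r.num + t.num, by linear_combination hrs - hst⟩
  exact_mod_cast hcop.dvd_of_dvd_mul_left h

end Rat

namespace IsFareySeq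

variable {n A : ℕ} {ρ : ℕ → ℚ}

lemma strictMonoOn (hρ : IsFareySeq n A ρ) : StrictMonoOn ρ (Set.Iic A) :=
  fun i _ j hj hij => hρ.2.2.1 i j hij hj

lemma den_le (hρ : IsFareySeq n A ρ) {i : ℕ} (hi : i ≤ A) : (ρ i).den ≤ n :=
  (hρ.2.2.2.1 i hi).2.2

lemma succ_le_of_lt (hρ : IsFareySeq n A ρ) {k : ℕ} (hk : k + 1 ≤ A) {r : ℚ} (hr : ρ k < r)
    (hrn : r.den ≤ n) : ρ (k + 1) ≤ r := by
  have hmono := hρ.strictMonoOn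
  obtain ⟨-, -, -, hmem, hall⟩ := hρ
  rcases le_or_gt r 1 with hr₁ | hr₁
  · obtain ⟨i, hi, rfl⟩ := hall r ((hmem k (by omega)).1.trans hr.le) hr₁ hrn
    have hki : k < i := (hmono.lt_iff_lt (show k ≤ A by omega) hi).1 hr
    exact (hmono.le_iff_le hk hi).2 hki
  · exact (hmem (k + 1) hk).2.1.trans hr₁.le

lemma det_succ_eq_one_and_lt_den_add_den (hρ : IsFareySeq n A ρ) {k : ℕ} (hk : k + 1 ≤ A) :
    ((ρ k).den : ℤ) * (ρ (k + 1)).num - (ρ k).num * (ρ (k + 1)).den = 1 ∧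
      n < (ρ k).den + (ρ (k + 1)).den := by
  obtain ⟨t, hdet, hlt, htn⟩ := (ρ k).exists_det_eq_one (hρ.den_le (i := k) (by omega))
  have hkt : ρ k < t := by rw [Rat.lt_iff]; linarith
  suffices ρ (k + 1) = t by rw [this]; exact ⟨hdet, hlt⟩
  refine (hρ.succ_le_of_lt hk hkt htn).antisymm (not_lt.mp fun h => ?_)
  have := Rat.den_add_den_le_of_lt_of_lt hdet
    (hρ.strictMonoOn (show k ≤ A by omega) hk (Nat.lt_succ_self k)) h
  have := hρ.den_le hk
  omega

end IsFareySeq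

theorem bcz_farey_step_general (n : ℕ) (ρ : ℕ → ℚ)
    (hρ : IsFareySeq n (fareyLen n) ρ) (k : ℕ) (hk : k + 2 ≤ fareyLen n) :
    ((((ρ k).den : ℝ) / n, ((ρ (k + 1)).den : ℝ) / n)) ∈ fareyTriangle ∧
      bczT (((ρ k).den : ℝ) / n, ((ρ (k + 1)).den : ℝ) / n) =
        (((ρ (k + 1)).den : ℝ) / n, ((ρ (k + 2)).den : ℝ) / n) := by
  have hk₁ : k + 1 ≤ fareyLen n := by omega
  obtain ⟨hdet₁, hlt₁⟩ := hρ.det_succ_eq_one_and_lt_den_add_den hk₁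
  obtain ⟨hdet₂, hlt₂⟩ := hρ.det_succ_eq_one_and_lt_den_add_den hk
  obtain ⟨m, hm⟩ := Rat.den_dvd_den_add_den hdet₁ hdet₂
  refine ⟨natCast_div_mem_fareyTriangle (hρ.den_le (by omega)) (hρ.den_le hk₁) hlt₁,
    bczT_eq_of_mem (m := m) (natCast_div_mem_fareyTriangle (hρ.den_le hk₁) (hρ.den_le hk) hlt₂) ?_⟩
  rw [← add_div, mul_div_assoc', mul_comm]
  congr 1
  exact_mod_cast hm

theorem bcz_farey_step (n : ℕ) (hn : 1 ≤ n) (ρ : ℕ → ℚ)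
    (hρ : IsFareySeq n (fareyLen n) ρ) (k : ℕ) (hk : k + 2 ≤ fareyLen n) :
    ((((ρ k).den : ℝ) / n, ((ρ (k + 1)).den : ℝ) / n)) ∈ fareyTriangle ∧
      bczT (((ρ k).den : ℝ) / n, ((ρ (k + 1)).den : ℝ) / n) =
        (((ρ (k + 1)).den : ℝ) / n, ((ρ (k + 2)).den : ℝ) / n) :=
  bcz_farey_step_general n ρ hρ k hk
end

section
/- For every (a,b) in the Farey triangle Ω, −1 ≤ R(a,b) − k̂(a,b) < 2. -/
/-!
Dropping the floors raises `k̂` by less than `1`, and `R` minus the unfloored `k̂` is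
`(2 - (a + b) - (a - b)²) / (2ab) - 1 = 1 - (a + b - 1)(a + b + 2) / (2ab)`.
The first form is `≥ -1` because `(a - b)² ≤ 2 - (a + b)` on the unit square, the second is
`≤ 1` because `a + b > 1`.
-/

noncomputable def khatUnfloored (p : ℝ × ℝ) : ℝ :=
  ((1 + p.1) / p.2 + (1 + p.2) / p.1) / 2

lemma khat_le_khatUnfloored (p : ℝ × ℝ) : khat p ≤ khatUnfloored p := by
  unfold khat khatUnfloored
  linarith [Int.floor_le ((1 + p.1) / p.2), Int.floor_le ((1 + p.2) / p.1)]

lemma khatUnfloored_sub_one_lt_khat (p : ℝ × ℝ) : khatUnfloored p - 1 < khat p := by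
  unfold khat khatUnfloored
  linarith [Int.sub_one_lt_floor ((1 + p.1) / p.2), Int.sub_one_lt_floor ((1 + p.2) / p.1)]

section Identities

variable {a b : ℝ} (ha : a ≠ 0) (hb : b ≠ 0)
include ha hb

lemma one_div_mul_sub_khatUnfloored_eq_sq :
    1 / (a * b) - khatUnfloored (a, b) = (2 - (a + b) - (a - b) ^ 2) / (2 * a * b) - 1 := by
  unfold khatUnfloored
  field_simp
  ring

lemma one_div_mul_sub_khatUnfloored_eq_mul :
    1 / (a * b) - khatUnfloored (a, b) = 1 - (a + b - 1) * (a + b + 2) / (2 * a * b) := by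
  unfold khatUnfloored
  field_simp
  ring

end Identities

lemma sq_sub_le_two_sub_add {a b : ℝ} (ha : 0 ≤ a) (ha1 : a ≤ 1) (hb : 0 ≤ b) (hb1 : b ≤ 1) :
    (a - b) ^ 2 ≤ 2 - (a + b) := by
  nlinarith [mul_nonneg ha (sub_nonneg.2 hb1), mul_nonneg hb (sub_nonneg.2 ha1)]

theorem R_sub_khat_bounds (p : ℝ × ℝ) (hp : p ∈ fareyTriangle) :
    -1 ≤ 1 / (p.1 * p.2) - khat p ∧ 1 / (p.1 * p.2) - khat p < 2 := by
  obtain ⟨a, b⟩ := p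
  obtain ⟨ha, ha1, hb, hb1, hab⟩ := hp
  have hab2 : 0 < 2 * a * b := by positivity
  have hle := khat_le_khatUnfloored (a, b)
  have hlt := khatUnfloored_sub_one_lt_khat (a, b)
  constructor
  · have hpos : 0 ≤ (2 - (a + b) - (a - b) ^ 2) / (2 * a * b) :=
      div_nonneg (by linarith [sq_sub_le_two_sub_add ha.le ha1 hb.le hb1]) hab2.le
    linarith [one_div_mul_sub_khatUnfloored_eq_sq ha.ne' hb.ne']
  · have hpos : 0 ≤ (a + b - 1) * (a + b + 2) / (2 * a * b) :=
      div_nonneg (mul_nonneg (by linarith) (by linarith)) hab2.le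
    linarith [one_div_mul_sub_khatUnfloored_eq_mul ha.ne' hb.ne']
end

section
/- Let (a_1,…,a_n) be a generalized arithmetic sequence, let m with 2 ≤ m ≤ n−1 be such that a_m ≥ a_i for all 1 ≤ i ≤ n, and suppose there exists j with a_m > a_j. Then a_m is a local maximum, i.e. a_m > a_{m−1} and a_m > a_{m+1} (and consequently a_m = a_{m−1} + a_{m+1}). -/
/-!
Let `M = a m`. The multiplier at `m` is `c` with `a (m-1) + a (m+1) = c M ≤ 2 M`, so either `c = 1`,
which is the claim, or both neighbours equal `M`. Two consecutive terms equal to the maximum force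
their neighbours to be maximal as well (the third term is `(c - 1) M`, positive and at most `M`),
so in the second case the sequence is constant, contradicting `a j < a m`.
-/

/-- A generalized arithmetic sequence `(a 1, …, a n)` of positive reals:
each interior term divides the sum of its two neighbors. -/
def IsGAS (n : ℕ) (a : ℕ → ℝ) : Prop :=
  (∀ i, 1 ≤ i → i ≤ n → 0 < a i) ∧
  (∀ i, 2 ≤ i → i + 1 ≤ n → ∃ c : ℕ+, a (i - 1) + a (i + 1) = (c : ℝ) * a i)

lemma add_eq_or_eq_of_add_eq_pnat_mul {x y M : ℝ} {c : ℕ+} (hM : 0 ≤ M)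
    (hxM : x ≤ M) (hyM : y ≤ M) (h : x + y = c * M) : x + y = M ∨ x = M ∧ y = M := by
  rcases eq_or_ne c 1 with rfl | hc
  · left
    simpa using h
  · right
    have hc2 : (2 : ℝ) ≤ c := by
      have : (c : ℕ) ≠ 1 := by rwa [Ne, PNat.coe_eq_one_iff]
      exact_mod_cast (show 2 ≤ (c : ℕ) by have := c.pos; omega)
    have : 2 * M ≤ x + y := h ▸ mul_le_mul_of_nonneg_right hc2 hM
    constructor <;> linarith

namespace IsGAS

variable {n : ℕ} {a : ℕ → ℝ} {M : ℝ}

lemma neighbors_of_eq_max (h : IsGAS n a) (hM : ∀ i, 1 ≤ i → i ≤ n → a i ≤ M) {i : ℕ}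
    (hi : 2 ≤ i) (hin : i + 1 ≤ n) (hai : a i = M) :
    a (i - 1) + a (i + 1) = M ∨ a (i - 1) = M ∧ a (i + 1) = M := by
  obtain ⟨c, hc⟩ := h.2 i hi hin
  exact add_eq_or_eq_of_add_eq_pnat_mul (hai ▸ (h.1 i (by omega) (by omega)).le)
    (hM _ (by omega) (by omega)) (hM _ (by omega) hin) (hai ▸ hc)

lemma eq_max_succ (h : IsGAS n a) (hM : ∀ i, 1 ≤ i → i ≤ n → a i ≤ M) {i : ℕ}
    (hi : 2 ≤ i) (hin : i + 1 ≤ n) (hprev : a (i - 1) = M) (hai : a i = M) : a (i + 1) = M := by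
  have hpos := h.1 (i + 1) (by omega) hin
  rcases h.neighbors_of_eq_max hM hi hin hai with hsum | ⟨-, hnext⟩
  · linarith
  · exact hnext

lemma eq_max_pred (h : IsGAS n a) (hM : ∀ i, 1 ≤ i → i ≤ n → a i ≤ M) {i : ℕ}
    (hi : 2 ≤ i) (hin : i + 1 ≤ n) (hai : a i = M) (hnext : a (i + 1) = M) : a (i - 1) = M := by
  have hpos := h.1 (i - 1) (by omega) (by omega)
  rcases h.neighbors_of_eq_max hM hi hin hai with hsum | ⟨hprev, -⟩
  · linarith
  · exact hprev

lemma eq_max_of_consecutive (h : IsGAS n a) (hM : ∀ i, 1 ≤ i → i ≤ n → a i ≤ M) {k : ℕ}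
    (hk : 1 ≤ k) (hkn : k + 1 ≤ n) (hak : a k = M) (hak' : a (k + 1) = M) :
    ∀ i, 1 ≤ i → i ≤ n → a i = M := by
  have up : ∀ i, k ≤ i → i + 1 ≤ n → a i = M ∧ a (i + 1) = M := by
    intro i hki
    induction i, hki using Nat.le_induction with
    | base => exact fun _ => ⟨hak, hak'⟩
    | succ i hki ih =>
      intro hin
      obtain ⟨hai, hai'⟩ := ih (by omega)
      exact ⟨hai', h.eq_max_succ hM (by omega) hin (by simpa using hai) hai'⟩
  have down : ∀ i, i ≤ k → 1 ≤ i → a i = M ∧ a (i + 1) = M := by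
    intro i hik
    induction hik using Nat.decreasingInduction with
    | self => exact fun _ => ⟨hak, hak'⟩
    | of_succ i hik ih =>
      intro hi
      obtain ⟨hai, hai'⟩ := ih (by omega)
      exact ⟨by simpa using h.eq_max_pred hM (by omega) (by omega) hai hai', hai⟩
  intro i hi hin
  rcases Nat.lt_or_ge i k with hik | hki
  · exact (down i hik.le hi).1
  · rcases hin.lt_or_eq with hin' | rfl
    · exact (up i hki hin').1
    · simpa [Nat.sub_add_cancel (by omega : 1 ≤ i)] using (up (i - 1) (by omega) (by omega)).2

end IsGAS

/-- A largest interior term of a generalized arithmetic sequence which is strictly larger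
than some term is a local maximum, and equals the sum of its two neighbors. -/
theorem gas_largest_is_local_max (n : ℕ) (a : ℕ → ℝ) (h : IsGAS n a)
    (m : ℕ) (hm1 : 2 ≤ m) (hm2 : m + 1 ≤ n)
    (hmax : ∀ i, 1 ≤ i → i ≤ n → a i ≤ a m)
    (j : ℕ) (hj1 : 1 ≤ j) (hj2 : j ≤ n) (hj : a j < a m) :
    a (m - 1) < a m ∧ a (m + 1) < a m ∧ a m = a (m - 1) + a (m + 1) := by
  rcases h.neighbors_of_eq_max hmax hm1 hm2 rfl with hsum | ⟨hprev, hnext⟩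
  · have hprev_pos := h.1 (m - 1) (by omega) (by omega)
    have hnext_pos := h.1 (m + 1) (by omega) hm2
    exact ⟨by linarith, by linarith, hsum.symm⟩
  · have hconst := h.eq_max_of_consecutive hmax (k := m - 1) (by omega) (by omega) hprev
      (by rw [Nat.sub_add_cancel (by omega)])
    exact absurd (hconst j hj1 hj2) hj.ne
end

section
/- (Reverse of a BCZ orbit is a BCZ orbit.) Let ((a_i,b_i))_{i∈ℤ} be a bi-infinite sequence of points of the Farey triangle Ω with T(a_i,b_i) = (a_{i+1},b_{i+1}) for all i ∈ ℤ, and fix s ∈ ℤ. Define (c_i,d_i) := (b_{s−1−i}, a_{s−1−i}) for i ∈ ℤ. Then (c_i,d_i) ∈ Ω and T(c_i,d_i) = (c_{i+1},d_{i+1}) for all i ∈ ℤ; equivalently, T^{i}(b_{s−1}, a_{s−1}) = (b_{s−1−i}, a_{s−1−i}) for all i ≥ 0. -/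
/-! The flip `σ (a, b) = (b, a)` conjugates `T` to its inverse on `Ω`: if `T (a, b) = (b, k b - a)`
with `k = ⌊(1 + a) / b⌋`, then `(1 + (k b - a)) / b = k + (1 - a) / b` and `0 ≤ (1 - a) / b < 1`
on `Ω`, so the same `k` occurs and `T (b, k b - a) = (b, a)`, i.e. `T (σ (T x)) = σ x`. Flipping
the points of an orbit and reading them backwards therefore gives an orbit again. -/

theorem swap_mem_fareyTriangle_s18 {q : ℝ × ℝ} : q.swap ∈ fareyTriangle ↔ q ∈ fareyTriangle := by
  simp only [fareyTriangle, Set.mem_ofPred_eq, Prod.fst_swap, Prod.snd_swap, add_comm q.2 q.1]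
  tauto

theorem bczT_swap_bczT_s18 {q : ℝ × ℝ} (hb : 0 < q.2) (ha : q.1 ≤ 1) (hab : 1 < q.1 + q.2) :
    bczT (bczT q).swap = q.swap := by
  obtain ⟨a, b⟩ := q
  have hfloor : ⌊(1 + (⌊(1 + a) / b⌋ * b - a)) / b⌋ = ⌊(1 + a) / b⌋ := by
    have hsplit : (1 + (⌊(1 + a) / b⌋ * b - a)) / b = ⌊(1 + a) / b⌋ + (1 - a) / b := by
      field_simp
      ring
    have hfrac : ⌊(1 - a) / b⌋ = 0 := by
      rw [Int.floor_eq_zero_iff]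
      exact ⟨div_nonneg (by linarith) hb.le, (div_lt_one hb).2 (by linarith)⟩
    rw [hsplit, Int.floor_intCast_add, hfrac, add_zero]
  simp only [bczT, Prod.swap_prod_mk]
  rw [hfloor]
  exact Prod.ext rfl (by ring)

theorem iterate_apply_eq_sub_of_apply_succ {α : Type*} {g : α → α} {q : ℤ → α}
    (hg : ∀ j, g (q (j + 1)) = q j) (j : ℤ) (n : ℕ) : g^[n] (q j) = q (j - n) := by
  induction n with
  | zero => simp
  | succ n ih =>
    rw [Function.iterate_succ_apply', ih, ← hg (j - (n + 1 : ℕ))]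
    congr 2
    push_cast
    ring

theorem reverse_bcz_orbit (p : ℤ → ℝ × ℝ)
    (hΩ : ∀ i, p i ∈ fareyTriangle) (hT : ∀ i, bczT (p i) = p (i + 1)) (s : ℤ) :
    (∀ i : ℤ, ((p (s - 1 - i)).2, (p (s - 1 - i)).1) ∈ fareyTriangle ∧
        bczT ((p (s - 1 - i)).2, (p (s - 1 - i)).1) =
          ((p (s - 1 - (i + 1))).2, (p (s - 1 - (i + 1))).1)) ∧
      (∀ i : ℕ, bczT^[i] ((p (s - 1)).2, (p (s - 1)).1) =
        ((p (s - 1 - (i : ℤ))).2, (p (s - 1 - (i : ℤ))).1)) := by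
  have hback : ∀ j, bczT (p (j + 1)).swap = (p j).swap := fun j => by
    obtain ⟨-, ha, hb, -, hab⟩ := hΩ j
    rw [← hT j]
    exact bczT_swap_bczT_s18 hb ha hab
  refine ⟨fun i => ⟨swap_mem_fareyTriangle_s18.2 (hΩ _), ?_⟩,
    iterate_apply_eq_sub_of_apply_succ (q := fun j => (p j).swap) hback (s - 1)⟩
  have hi : s - 1 - (i + 1) + 1 = s - 1 - i := by ring
  have hstep := hback (s - 1 - (i + 1))
  rwa [hi] at hstep
end

section
/- (Upper bound for the length of an excursion.) For every excursion ((a_i,b_i))_{i=0}^{s} of the BCZ map, s ≤ 1/(a_0 · a_s). -/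
/-!
Write `L = intComb (p 0)`, `L z = z₁ a₀ + z₂ b₀`. Along an orbit of `T` the points are
`p i = (L vᵢ, L vᵢ₊₁)`, where `v₀ = (1,0), v₁ = (0,1), vᵢ₊₂ = kᵢ vᵢ₊₁ - vᵢ` with the digits `kᵢ`
of `T`; this is a path of consecutive bases of `ℤ²` (`cross vᵢ vᵢ₊₁ = 1`). The Wronskian identity
`aᵢ qᵢ₊₁ - aᵢ₊₁ qᵢ = a₀` for the second coordinates `qᵢ` of `vᵢ` gives `qᵢ ≥ i a₀ aᵢ` inductively.
For an excursion, every lattice point `z` strictly inside the cone spanned by `v₀` and `vₛ` lies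
in some cone `[vᵢ, vᵢ₊₁)`, hence `L z ≥ aᵢ + aᵢ₊₁ > 1` or `L z ≥ aᵢ₊₁ > max (a₀, aₛ)`; so
`2 L z > a₀ + aₛ`. If `qₛ ≥ 2`, then `v₀ + vₛ` splits into two such lattice points, which is
absurd. Hence `qₛ = 1` and `s a₀ aₛ ≤ 1`.
-/

theorem Nat.exists_lt_and_not_succ {P : ℕ → Prop} {s : ℕ} (h0 : P 0) (hs : ¬ P s) :
    ∃ i < s, P i ∧ ¬ P (i + 1) := by
  induction s with
  | zero => exact absurd h0 hs
  | succ s ih =>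
    by_cases h : P s
    · exact ⟨s, s.lt_succ_self, h, hs⟩
    · obtain ⟨i, hi, hPi, hPi'⟩ := ih h
      exact ⟨i, by omega, hPi, hPi'⟩

namespace BCZ

def cross (v w : ℤ × ℤ) : ℤ := v.1 * w.2 - v.2 * w.1

def intComb (x : ℝ × ℝ) (z : ℤ × ℤ) : ℝ := z.1 * x.1 + z.2 * x.2

theorem cross_anticomm (v w : ℤ × ℤ) : cross v w = -cross w v := by
  simp only [cross]; ring

theorem intComb_add (x : ℝ × ℝ) (z w : ℤ × ℤ) :
    intComb x (z + w) = intComb x z + intComb x w := by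
  simp only [intComb, Prod.fst_add, Prod.snd_add, Int.cast_add]
  ring

theorem intComb_eq_of_cross_eq_one (x : ℝ × ℝ) {v w : ℤ × ℤ} (hvw : cross v w = 1)
    (z : ℤ × ℤ) : intComb x z = cross z w * intComb x v + cross v z * intComb x w := by
  have hvw' : (v.1 : ℝ) * w.2 - v.2 * w.1 = 1 := by exact_mod_cast hvw
  simp only [intComb, cross, Int.cast_sub, Int.cast_mul]
  linear_combination (-(z.1 * x.1 + z.2 * x.2)) * hvw'

theorem intComb_mul_snd_sub (x : ℝ × ℝ) (v w : ℤ × ℤ) :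
    intComb x v * w.2 - intComb x w * v.2 = cross v w * x.1 := by
  simp only [intComb, cross, Int.cast_sub, Int.cast_mul]
  ring

theorem isCoprime_of_cross_eq_one {v w : ℤ × ℤ} (hvw : cross v w = 1) : IsCoprime w.1 w.2 :=
  ⟨-v.2, v.1, by rw [← hvw, cross]; ring⟩

/-- `0 < z.2 ∧ cross w z < 0` says that `z` lies strictly inside the cone spanned by `(1, 0)`
and `w`. -/
theorem exists_add_eq_of_two_le_snd {w : ℤ × ℤ} (hw : IsCoprime w.1 w.2) (h2 : 2 ≤ w.2) :
    ∃ z₁ z₂ : ℤ × ℤ, z₁ + z₂ = (1, 0) + w ∧ 0 < z₁.2 ∧ 0 < z₂.2 ∧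
      cross w z₁ < 0 ∧ cross w z₂ < 0 := by
  obtain ⟨P, N⟩ := w
  dsimp only at hw h2
  have hN : N ≠ 0 := by omega
  have hrem_ne : P % N ≠ 0 := fun h0 => by
    have hunit := hw.symm.isUnit_of_dvd (Int.dvd_of_emod_eq_zero h0)
    rcases Int.isUnit_iff.mp hunit with h | h <;> omega
  have hdiv := Int.mul_ediv_add_emod P N
  have hrem_nonneg := Int.emod_nonneg P hN
  have hrem_lt := Int.emod_lt_of_pos P (by omega : 0 < N)
  refine ⟨(P / N + 1, 1), (P - P / N, N - 1), ?_, one_pos, by omega, ?_, ?_⟩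
  · ext <;> simp only [Prod.fst_add, Prod.snd_add] <;> ring
  · simp only [cross]; nlinarith
  · simp only [cross]
    have : 0 < P % N := by omega
    nlinarith

def basisPath (k : ℕ → ℤ) : ℕ → ℤ × ℤ
  | 0 => (1, 0)
  | 1 => (0, 1)
  | n + 2 => k n • basisPath k (n + 1) - basisPath k n

theorem cross_basisPath_succ (k : ℕ → ℤ) : ∀ n, cross (basisPath k n) (basisPath k (n + 1)) = 1
  | 0 => by simp [cross, basisPath]
  | n + 1 => by
    have ih := cross_basisPath_succ k n
    simp only [cross, basisPath, Prod.fst_sub, Prod.snd_sub, Prod.smul_fst, Prod.smul_snd,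
      smul_eq_mul] at ih ⊢
    linear_combination ih

theorem intComb_basisPath_add_two (x : ℝ × ℝ) (k : ℕ → ℤ) (n : ℕ) :
    intComb x (basisPath k (n + 2)) =
      k n * intComb x (basisPath k (n + 1)) - intComb x (basisPath k n) := by
  simp only [basisPath, intComb, Prod.fst_sub, Prod.snd_sub, Prod.smul_fst, Prod.smul_snd,
    smul_eq_mul, Int.cast_sub, Int.cast_mul]
  ring

noncomputable def orbitPath (p : ℕ → ℝ × ℝ) : ℕ → ℤ × ℤ :=
  basisPath fun i => ⌊(1 + (p i).1) / (p i).2⌋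

@[simp]
theorem orbitPath_zero (p : ℕ → ℝ × ℝ) : orbitPath p 0 = (1, 0) := rfl

theorem cross_orbitPath_succ (p : ℕ → ℝ × ℝ) (n : ℕ) :
    cross (orbitPath p n) (orbitPath p (n + 1)) = 1 :=
  cross_basisPath_succ _ n

theorem orbit_eq_intComb {p : ℕ → ℝ × ℝ} {s : ℕ} (hT : ∀ i < s, p (i + 1) = bczT (p i)) :
    ∀ i ≤ s, p i = (intComb (p 0) (orbitPath p i), intComb (p 0) (orbitPath p (i + 1)))
  | 0, _ => by simp [orbitPath, basisPath, intComb]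
  | i + 1, hi => by
    obtain ⟨h₁, h₂⟩ := Prod.ext_iff.mp (orbit_eq_intComb hT i (by omega))
    simp only [orbitPath, intComb_basisPath_add_two] at h₁ h₂ ⊢
    rw [hT i (by omega), bczT, ← h₁, ← h₂]

theorem orbit_fst_eq_intComb {p : ℕ → ℝ × ℝ} {s : ℕ} (hT : ∀ i < s, p (i + 1) = bczT (p i))
    {i : ℕ} (hi : i ≤ s) : (p i).1 = intComb (p 0) (orbitPath p i) := by
  rw [orbit_eq_intComb hT i hi]

theorem orbit_snd_eq_intComb {p : ℕ → ℝ × ℝ} {s : ℕ} (hT : ∀ i < s, p (i + 1) = bczT (p i))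
    {i : ℕ} (hi : i ≤ s) : (p i).2 = intComb (p 0) (orbitPath p (i + 1)) := by
  rw [orbit_eq_intComb hT i hi]

theorem orbitPath_snd_lower_bound {p : ℕ → ℝ × ℝ} {s : ℕ}
    (hΩ : ∀ i ≤ s, p i ∈ fareyTriangle) (hT : ∀ i < s, p (i + 1) = bczT (p i)) :
    ∀ n ≤ s, n * ((p 0).1 * (p n).1) ≤ (orbitPath p n).2 := by
  intro n
  induction n with
  | zero => intro _; simp
  | succ m ih =>
    intro hm
    obtain ⟨ha0, -⟩ := hΩ 0 (by omega)
    obtain ⟨ha, ha1, hb, hb1, -⟩ := hΩ m (by omega)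
    have hq := ih (by omega)
    have hnext : (p (m + 1)).1 = (p m).2 := by rw [hT m (by omega), bczT]
    have wronskian : (p m).1 * (orbitPath p (m + 1)).2 - (p m).2 * (orbitPath p m).2 = (p 0).1 := by
      have := intComb_mul_snd_sub (p 0) (orbitPath p m) (orbitPath p (m + 1))
      rwa [cross_orbitPath_succ, Int.cast_one, one_mul, ← orbit_fst_eq_intComb hT (by omega),
        ← orbit_snd_eq_intComb hT (by omega)] at this
    have hab : (p m).1 * (p m).2 ≤ 1 := by nlinarith
    rw [hnext]
    refine le_of_mul_le_mul_right ?_ ha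
    push_cast
    nlinarith [mul_le_mul_of_nonneg_left hq hb.le, mul_le_mul_of_nonneg_left hab ha0.le]

variable {p : ℕ → ℝ × ℝ} {s : ℕ}

theorem _root_.IsExcursion.lt_two_mul_intComb (h : IsExcursion p s) {z : ℤ × ℤ} (hz₀ : 0 < z.2)
    (hzₛ : cross (orbitPath p s) z < 0) : (p 0).1 + (p s).1 < 2 * intComb (p 0) z := by
  obtain ⟨-, hΩ, hT, hmid⟩ := h
  obtain ⟨i, his, hpos, hnonpos⟩ :=
    Nat.exists_lt_and_not_succ (P := fun j => 0 < cross (orbitPath p j) z)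
      (by simpa [cross] using hz₀) (not_lt.mpr hzₛ.le)
  simp only [not_lt] at hnonpos
  have hL : intComb (p 0) z =
      -cross (orbitPath p (i + 1)) z * (p i).1 + cross (orbitPath p i) z * (p i).2 := by
    rw [intComb_eq_of_cross_eq_one (p 0) (cross_orbitPath_succ p i) z,
      orbit_fst_eq_intComb hT his.le, orbit_snd_eq_intComb hT his.le, cross_anticomm z,
      Int.cast_neg]
  obtain ⟨ha, -, hb, -, hab⟩ := hΩ i his.le
  have ha₀ := (hΩ 0 (by omega)).2.1
  have haₛ := (hΩ s le_rfl).2.1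
  have hc : (1 : ℝ) ≤ cross (orbitPath p i) z := by exact_mod_cast hpos
  rcases hnonpos.lt_or_eq with hneg | hzero
  · have hc' : (1 : ℝ) ≤ -cross (orbitPath p (i + 1)) z := by
      exact_mod_cast (by omega : 1 ≤ -cross (orbitPath p (i + 1)) z)
    nlinarith
  · have hi : i + 1 < s := lt_of_le_of_ne his fun he => by rw [he] at hzero; omega
    obtain ⟨h₀, hₛ⟩ := hmid (i + 1) (by omega) hi
    have hnext : (p (i + 1)).1 = (p i).2 := by rw [hT i his, bczT]
    rw [hzero, Int.cast_zero, neg_zero, zero_mul, zero_add] at hL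
    nlinarith

theorem _root_.IsExcursion.orbitPath_snd_eq_one (h : IsExcursion p s) :
    (orbitPath p s).2 = 1 := by
  obtain ⟨hs, hΩ, hT, -⟩ := id h
  have hq_pos : 0 < (orbitPath p s).2 := by
    have hbound := orbitPath_snd_lower_bound hΩ hT s le_rfl
    have : (0 : ℝ) < s * ((p 0).1 * (p s).1) := by
      have := (hΩ 0 (by omega)).1
      have := (hΩ s le_rfl).1
      have : (0 : ℝ) < s := by exact_mod_cast hs
      positivity
    exact_mod_cast this.trans_le hbound
  by_contra hne
  obtain ⟨t, rfl⟩ : ∃ t, s = t + 1 := ⟨s - 1, by omega⟩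
  obtain ⟨z₁, z₂, hsum, h₁, h₂, h₁', h₂'⟩ :=
    exists_add_eq_of_two_le_snd (isCoprime_of_cross_eq_one (cross_orbitPath_succ p t)) (by omega)
  have hL := congrArg (intComb (p 0)) hsum
  rw [intComb_add, intComb_add, ← orbit_fst_eq_intComb hT le_rfl] at hL
  have he₁ : intComb (p 0) (1, 0) = (p 0).1 := by simp [intComb]
  have := h.lt_two_mul_intComb h₁ h₁'
  have := h.lt_two_mul_intComb h₂ h₂'
  linarith

end BCZ

theorem excursion_length_upper_bound (p : ℕ → ℝ × ℝ) (s : ℕ) (h : IsExcursion p s) :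
    (s : ℝ) ≤ 1 / ((p 0).1 * (p s).1) := by
  obtain ⟨-, hΩ, hT, -⟩ := id h
  have hq := BCZ.orbitPath_snd_lower_bound hΩ hT s le_rfl
  rw [h.orbitPath_snd_eq_one, Int.cast_one] at hq
  rw [le_div_iff₀ (mul_pos (hΩ 0 (Nat.zero_le s)).1 (hΩ s le_rfl).1)]
  exact hq
end
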